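/- Let (M, E) be an exact category. Then the quotient category E(M)/S(M) of the category of conflations by the full subcategory of split conflations is an abelian category. -/

import Mathlib

open CategoryTheory CategoryTheory.Limits

universe v u

namespace PaperQEC

section QuotientCategory

variable {C : Type u} [Category.{v} C] [Preadditive C]

/-- `f` factors through an object belonging to `P`. -/
def FactorsThru (P : Set C) {X Y : C} (f : X ⟶ Y) : Prop :=
  ∃ Z ∈ P, ∃ (g : X ⟶ Z) (h : Z ⟶ Y), g ≫ h = f

/-- The subgroup of `Hom(X, Y)` generated by morphisms factoring through an object of `P`
(for `P` closed under finite sums this is just the set of such morphisms). -/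
def factorIdeal (P : Set C) (X Y : C) : AddSubgroup (X ⟶ Y) :=
  AddSubgroup.closure {f | FactorsThru P f}

lemma factorIdeal_comp_left (P : Set C) {X Y Z : C} {f : X ⟶ Y}
    (hf : f ∈ factorIdeal P X Y) (g : Y ⟶ Z) : f ≫ g ∈ factorIdeal P X Z := by
  have h : factorIdeal P X Y ≤
      (factorIdeal P X Z).comap (AddMonoidHom.mk' (fun u : X ⟶ Y => u ≫ g)
        (fun a b => Preadditive.add_comp _ _ _ _ _ _)) := by
    refine (AddSubgroup.closure_le _).mpr ?_
    rintro u ⟨Zp, hZp, a, b, rfl⟩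
    exact AddSubgroup.mem_comap.mpr
      (AddSubgroup.subset_closure ⟨Zp, hZp, a, b ≫ g, (Category.assoc _ _ _).symm⟩)
  exact h hf

lemma factorIdeal_comp_right (P : Set C) {X Y Z : C} (f : X ⟶ Y) {g : Y ⟶ Z}
    (hg : g ∈ factorIdeal P Y Z) : f ≫ g ∈ factorIdeal P X Z := by
  have h : factorIdeal P Y Z ≤
      (factorIdeal P X Z).comap (AddMonoidHom.mk' (fun u : Y ⟶ Z => f ≫ u)
        (fun a b => Preadditive.comp_add _ _ _ _ _ _)) := by
    refine (AddSubgroup.closure_le _).mpr ?_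
    rintro u ⟨Zp, hZp, a, b, rfl⟩
    exact AddSubgroup.mem_comap.mpr
      (AddSubgroup.subset_closure ⟨Zp, hZp, f ≫ a, b, Category.assoc _ _ _⟩)
  exact h hg

/-- Objects of the quotient (stable) category `C / P`. -/
structure QuotObj (P : Set C) : Type u where
  obj : C

variable (P : Set C)

instance quotCategory : Category.{v} (QuotObj P) where
  Hom A B := (A.obj ⟶ B.obj) ⧸ factorIdeal P A.obj B.obj
  id A := QuotientAddGroup.mk (𝟙 A.obj)
  comp {A B D} f g :=
    Quotient.liftOn₂ f g (fun a b => QuotientAddGroup.mk (a ≫ b)) (by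
      intro a₁ b₁ a₂ b₂ ha hb
      have ha' : -a₁ + a₂ ∈ factorIdeal P A.obj B.obj := QuotientAddGroup.leftRel_apply.mp ha
      have hb' : -b₁ + b₂ ∈ factorIdeal P B.obj D.obj := QuotientAddGroup.leftRel_apply.mp hb
      refine (QuotientAddGroup.eq (s := factorIdeal P A.obj D.obj)).mpr ?_
      have h1 : (-a₁ + a₂) ≫ b₁ ∈ factorIdeal P A.obj D.obj :=
        factorIdeal_comp_left P ha' b₁
      have h2 : a₂ ≫ (-b₁ + b₂) ∈ factorIdeal P A.obj D.obj :=
        factorIdeal_comp_right P a₂ hb'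
      have h3 := AddSubgroup.add_mem _ h1 h2
      have heq : -(a₁ ≫ b₁) + a₂ ≫ b₂ = (-a₁ + a₂) ≫ b₁ + a₂ ≫ (-b₁ + b₂) := by
        simp only [Preadditive.add_comp, Preadditive.comp_add, Preadditive.neg_comp,
          Preadditive.comp_neg]
        abel
      rw [heq]; exact h3)
  id_comp {A B} f := by
    induction f using Quotient.inductionOn with
    | h a => exact congrArg QuotientAddGroup.mk (Category.id_comp a)
  comp_id {A B} f := by
    induction f using Quotient.inductionOn with
    | h a => exact congrArg QuotientAddGroup.mk (Category.comp_id a)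
  assoc {A B D E} f g h := by
    induction f using Quotient.inductionOn with
    | h a =>
    induction g using Quotient.inductionOn with
    | h b =>
    induction h using Quotient.inductionOn with
    | h c => exact congrArg QuotientAddGroup.mk (Category.assoc a b c)

/-- The image in the quotient category of a morphism of `C`. -/
def qmap {X Y : C} (f : X ⟶ Y) : (QuotObj.mk X : QuotObj P) ⟶ QuotObj.mk Y :=
  QuotientAddGroup.mk f

instance quotPreadditive : Preadditive (QuotObj P) where
  homGroup A B :=
    inferInstanceAs (AddCommGroup ((A.obj ⟶ B.obj) ⧸ factorIdeal P A.obj B.obj))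
  add_comp A B D f f' g := by
    induction f using Quotient.inductionOn with
    | h a =>
    induction f' using Quotient.inductionOn with
    | h a' =>
    induction g using Quotient.inductionOn with
    | h b =>
      show QuotientAddGroup.mk ((a + a') ≫ b) =
        QuotientAddGroup.mk (a ≫ b) + QuotientAddGroup.mk (a' ≫ b)
      rw [Preadditive.add_comp]
      rfl
  comp_add A B D f g g' := by
    induction f using Quotient.inductionOn with
    | h a =>
    induction g using Quotient.inductionOn with
    | h b =>
    induction g' using Quotient.inductionOn with
    | h b' =>
      show QuotientAddGroup.mk (a ≫ (b + b')) =
        QuotientAddGroup.mk (a ≫ b) + QuotientAddGroup.mk (a ≫ b')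
      rw [Preadditive.comp_add]
      rfl

end QuotientCategory

section Exact

variable {C : Type u} [Category.{v} C] [Preadditive C]

/-- `k` is a kernel of `f`. -/
def IsKernelOf {K X Y : C} (k : K ⟶ X) (f : X ⟶ Y) : Prop :=
  k ≫ f = 0 ∧ ∀ {T : C} (g : T ⟶ X), g ≫ f = 0 → ∃! t : T ⟶ K, t ≫ k = g

/-- `c` is a cokernel of `f`. -/
def IsCokernelOf {X Y Q : C} (c : Y ⟶ Q) (f : X ⟶ Y) : Prop :=
  f ≫ c = 0 ∧ ∀ {T : C} (g : Y ⟶ T), f ≫ g = 0 → ∃! t : Q ⟶ T, c ≫ t = g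

/-- A class of composable pairs of morphisms (the prospective conflations). -/
abbrev ConfClass (D : Type*) [Category D] :=
  ∀ ⦃X Y Z : D⦄, (X ⟶ Y) → (Y ⟶ Z) → Prop

/-- A Quillen exact structure on an additive category: a class of kernel–cokernel pairs
(conflations), closed under isomorphisms, containing the identities as inflations and
deflations, with inflations and deflations closed under composition, pushouts of
inflations and pullbacks of deflations existing and being inflations resp. deflations. -/
structure ExactStructure (D : Type u) [Category.{v} D] [Preadditive D] where
  conf : ConfClass D
  ker_of_conf : ∀ {X Y Z : D} {i : X ⟶ Y} {d : Y ⟶ Z}, conf i d → IsKernelOf i d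
  coker_of_conf : ∀ {X Y Z : D} {i : X ⟶ Y} {d : Y ⟶ Z}, conf i d → IsCokernelOf d i
  isoClosed : ∀ {X Y Z X' Y' Z' : D} {i : X ⟶ Y} {d : Y ⟶ Z} {i' : X' ⟶ Y'} {d' : Y' ⟶ Z'}
    (eX : X ≅ X') (eY : Y ≅ Y') (eZ : Z ≅ Z'),
    i ≫ eY.hom = eX.hom ≫ i' → d ≫ eZ.hom = eY.hom ≫ d' → conf i d → conf i' d'
  id_isInflation : ∀ X : D, ∃ (Z : D) (d : X ⟶ Z), conf (𝟙 X) d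
  id_isDeflation : ∀ X : D, ∃ (W : D) (i : W ⟶ X), conf i (𝟙 X)
  infl_comp : ∀ {X Y Z : D} (i : X ⟶ Y) (j : Y ⟶ Z),
    (∃ (W : D) (d : Y ⟶ W), conf i d) → (∃ (W : D) (d : Z ⟶ W), conf j d) →
    ∃ (W : D) (d : Z ⟶ W), conf (i ≫ j) d
  defl_comp : ∀ {X Y Z : D} (p : X ⟶ Y) (q : Y ⟶ Z),
    (∃ (W : D) (i : W ⟶ X), conf i p) → (∃ (W : D) (i : W ⟶ Y), conf i q) →
    ∃ (W : D) (i : W ⟶ X), conf i (p ≫ q)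
  infl_pushout : ∀ {X Y : D} (i : X ⟶ Y), (∃ (W : D) (d : Y ⟶ W), conf i d) →
    ∀ {A : D} (f : X ⟶ A), ∃ (B : D) (i' : A ⟶ B) (g : Y ⟶ B),
      (∃ (W : D) (d : B ⟶ W), conf i' d) ∧ IsPushout i f g i'
  defl_pullback : ∀ {Y Z : D} (p : Y ⟶ Z), (∃ (W : D) (i : W ⟶ Y), conf i p) →
    ∀ {B : D} (f : B ⟶ Z), ∃ (A : D) (p' : A ⟶ B) (g : A ⟶ Y),
      (∃ (W : D) (i : W ⟶ A), conf i p') ∧ IsPullback g p' p f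

/-- `i` is an inflation, i.e. the first map of some conflation. -/
def IsInflation (E : ConfClass C) {X Y : C} (i : X ⟶ Y) : Prop :=
  ∃ (Z : C) (d : Y ⟶ Z), E i d

/-- `d` is a deflation, i.e. the second map of some conflation. -/
def IsDeflation (E : ConfClass C) {Y Z : C} (d : Y ⟶ Z) : Prop :=
  ∃ (X : C) (i : X ⟶ Y), E i d

/-- `P` is a full additive subcategory: nonempty, closed under isomorphisms,
finite sums and summands. -/
structure IsAddSubcat [HasBinaryBiproducts C] (P : Set C) : Prop where
  nonempty : P.Nonempty
  isoClosed : ∀ {X Y : C}, (X ≅ Y) → X ∈ P → Y ∈ P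
  sumClosed : ∀ {X Y : C}, X ∈ P → Y ∈ P → (X ⊞ Y) ∈ P
  summandClosed : ∀ {X Y : C} (s : X ⟶ Y) (r : Y ⟶ X), s ≫ r = 𝟙 X → Y ∈ P → X ∈ P

/-- `f : Q ⟶ X` is a `P`-precover of `X`. -/
def IsPrecover (P : Set C) {Q X : C} (f : Q ⟶ X) : Prop :=
  Q ∈ P ∧ ∀ (Q' : C), Q' ∈ P → ∀ g : Q' ⟶ X, ∃ h : Q' ⟶ Q, h ≫ f = g

/-- `f : X ⟶ Q` is a `P`-preenvelope of `X`. -/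
def IsPreenvelope (P : Set C) {X Q : C} (f : X ⟶ Q) : Prop :=
  Q ∈ P ∧ ∀ (Q' : C), Q' ∈ P → ∀ g : X ⟶ Q', ∃ h : Q ⟶ Q', f ≫ h = g

/-- `P` is strongly contravariantly finite: every object has a `P`-precover
which is a deflation. -/
def StronglyContraFinite (E : ConfClass C) (P : Set C) : Prop :=
  ∀ X : C, ∃ (Q : C) (f : Q ⟶ X), IsPrecover P f ∧ IsDeflation E f

/-- `P` is strongly covariantly finite: every object has a `P`-preenvelope
which is an inflation. -/
def StronglyCovFinite (E : ConfClass C) (P : Set C) : Prop :=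
  ∀ X : C, ∃ (Q : C) (f : X ⟶ Q), IsPreenvelope P f ∧ IsInflation E f

/-- The pair `(i, d)` is `Hom(P,-)`-exact: for every `Q ∈ P`, the sequence
`0 → Hom(Q,X) → Hom(Q,Y) → Hom(Q,Z) → 0` is exact. -/
def HomCovExact (P : Set C) {X Y Z : C} (i : X ⟶ Y) (d : Y ⟶ Z) : Prop :=
  ∀ Q : C, Q ∈ P →
    (∀ g : Q ⟶ X, g ≫ i = 0 → g = 0) ∧
    (∀ u : Q ⟶ Y, u ≫ d = 0 → ∃ g : Q ⟶ X, g ≫ i = u) ∧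
    (∀ h : Q ⟶ Z, ∃ u : Q ⟶ Y, u ≫ d = h)

/-- The pair `(i, d)` is `Hom(-,P)`-exact: for every `Q ∈ P`, the sequence
`0 → Hom(Z,Q) → Hom(Y,Q) → Hom(X,Q) → 0` is exact. -/
def HomContraExact (P : Set C) {X Y Z : C} (i : X ⟶ Y) (d : Y ⟶ Z) : Prop :=
  ∀ Q : C, Q ∈ P →
    (∀ g : Z ⟶ Q, d ≫ g = 0 → g = 0) ∧
    (∀ u : Y ⟶ Q, i ≫ u = 0 → ∃ g : Z ⟶ Q, d ≫ g = u) ∧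
    (∀ h : X ⟶ Q, ∃ u : Y ⟶ Q, i ≫ u = h)

/-- Condition (▲): `P` is strongly covariantly finite and every `X` admits a conflation
`0 → X → Q₀ → Q₁ → 0` with `Q₀, Q₁ ∈ P` whose inflation is a `P`-preenvelope. -/
def CondEnv (E : ConfClass C) (P : Set C) : Prop :=
  StronglyCovFinite E P ∧
  ∀ X : C, ∃ (Q₀ Q₁ : C) (α : X ⟶ Q₀) (q : Q₀ ⟶ Q₁),
    E α q ∧ Q₀ ∈ P ∧ Q₁ ∈ P ∧ IsPreenvelope P α

/-- Condition (▼): `P` is strongly contravariantly finite and every `X` admits a conflation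
`0 → P₁ → P₀ → X → 0` with `P₀, P₁ ∈ P` whose deflation is a `P`-precover. -/
def CondCov (E : ConfClass C) (P : Set C) : Prop :=
  StronglyContraFinite E P ∧
  ∀ X : C, ∃ (P₀ P₁ : C) (i : P₁ ⟶ P₀) (β : P₀ ⟶ X),
    E i β ∧ P₀ ∈ P ∧ P₁ ∈ P ∧ IsPrecover P β

/-- `P` is a pseudo-cluster tilting subcategory. -/
def PseudoClusterTilting (E : ConfClass C) (P : Set C) : Prop :=
  CondEnv E P ∧ CondCov E P

/-- The conflation `(i, d)` splits. -/
def Splits {X Y Z : C} (i : X ⟶ Y) (d : Y ⟶ Z) : Prop :=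
  (∃ r : Y ⟶ X, i ≫ r = 𝟙 X) ∧ ∃ s : Z ⟶ Y, s ≫ d = 𝟙 Z

/-- `P` is self-orthogonal with respect to the class `cl` of conflations: every
conflation in `cl` with both end terms in `P` splits. -/
def SelfOrthWrt (P : Set C) (cl : ConfClass C) : Prop :=
  ∀ ⦃X Y Z : C⦄ (i : X ⟶ Y) (d : Y ⟶ Z), cl i d → X ∈ P → Z ∈ P → Splits i d

/-- `P` is a cluster tilting subcategory: a pseudo-cluster tilting subcategory which is
self-orthogonal with respect to all conflations. -/
def ClusterTilting (E : ConfClass C) (P : Set C) : Prop :=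
  PseudoClusterTilting E P ∧ SelfOrthWrt P E

/-- The class `𝒮` of conflations. -/
def memS (E : ConfClass C) (P : Set C) ⦃S₁ S₂ S₃ : C⦄ (i : S₁ ⟶ S₂) (d : S₂ ⟶ S₃) : Prop :=
  E i d ∧ ∃ (U M₁ M₂ : C) (u₁ : U ⟶ S₁) (p₁ : S₁ ⟶ M₁) (u₂ : U ⟶ S₂) (p₂ : S₂ ⟶ M₂)
    (m : M₁ ⟶ M₂) (q : M₂ ⟶ S₃),
    E u₁ p₁ ∧ E u₂ p₂ ∧ E m q ∧
    HomCovExact P u₂ p₂ ∧ HomContraExact P m q ∧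
    u₁ ≫ i = u₂ ∧ i ≫ p₂ = p₁ ≫ m ∧ d = p₂ ≫ q

/-- The class `𝒯` of conflations. -/
def memT (E : ConfClass C) (P : Set C) ⦃T₁ T₂ T₃ : C⦄ (i : T₁ ⟶ T₂) (d : T₂ ⟶ T₃) : Prop :=
  E i d ∧ ∃ (V N₂ N₃ : C) (n₁ : T₁ ⟶ N₂) (n₂ : N₂ ⟶ N₃) (j₂ : N₂ ⟶ T₂) (v₂ : T₂ ⟶ V)
    (j₃ : N₃ ⟶ T₃) (v₃ : T₃ ⟶ V),
    E n₁ n₂ ∧ E j₂ v₂ ∧ E j₃ v₃ ∧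
    HomCovExact P n₁ n₂ ∧ HomContraExact P j₂ v₂ ∧
    i = n₁ ≫ j₂ ∧ n₂ ≫ j₃ = j₂ ≫ d ∧ d ≫ v₃ = v₂

end Exact

section AbelianDefs

/-- A preadditive category is abelian (in the sense of Definition 2.1 of the paper) if it
has kernels and cokernels and the canonical morphism from the coimage to the image of any
morphism is an isomorphism. -/
def IsAbelianCat (D : Type*) [Category D] [Preadditive D] : Prop :=
  ∃ (hk : HasKernels D) (hc : HasCokernels D),
    ∀ {X Y : D} (f : X ⟶ Y),
      haveI := hk; haveI := hc; IsIso (CategoryTheory.Abelian.coimageImageComparison f)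

/-- A preadditive category is semi-abelian if it has kernels and cokernels and the
canonical morphism from the coimage to the image of any morphism is both an epimorphism
and a monomorphism. -/
def IsSemiAbelianCat (D : Type*) [Category D] [Preadditive D] : Prop :=
  ∃ (hk : HasKernels D) (hc : HasCokernels D),
    ∀ {X Y : D} (f : X ⟶ Y),
      haveI := hk; haveI := hc; Mono (CategoryTheory.Abelian.coimageImageComparison f) ∧
      Epi (CategoryTheory.Abelian.coimageImageComparison f)

end AbelianDefs

section ConflationCategory

variable {M : Type u} [Category.{v} M] [Preadditive M]

/-- Objects of the category `E(M)` of conflations: conflations `0 → X₁ → X₂ → X₃ → 0`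
of the exact category `(M, E)`. -/
structure ConfObj (E : ExactStructure M) : Type max u v where
  X₁ : M
  X₂ : M
  X₃ : M
  i : X₁ ⟶ X₂
  d : X₂ ⟶ X₃
  conf : E.conf i d

variable {E : ExactStructure M}

/-- The additive group of morphisms of conflations: triples of morphisms making the two
squares commute. -/
def confHomGroup (A B : ConfObj E) :
    AddSubgroup ((A.X₁ ⟶ B.X₁) × (A.X₂ ⟶ B.X₂) × (A.X₃ ⟶ B.X₃)) where
  carrier := {t | A.i ≫ t.2.1 = t.1 ≫ B.i ∧ A.d ≫ t.2.2 = t.2.1 ≫ B.d}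
  zero_mem' := by simp
  add_mem' := by
    rintro a b ⟨ha₁, ha₂⟩ ⟨hb₁, hb₂⟩
    refine ⟨?_, ?_⟩ <;>
      simp [Preadditive.comp_add, Preadditive.add_comp, ha₁, ha₂, hb₁, hb₂]
  neg_mem' := by
    rintro a ⟨h₁, h₂⟩
    refine ⟨?_, ?_⟩ <;> simp [h₁, h₂]

instance confCategoryStruct : CategoryStruct.{v} (ConfObj E) where
  Hom A B := ↥(confHomGroup A B)
  id A := ⟨(𝟙 _, 𝟙 _, 𝟙 _), by constructor <;> simp⟩
  comp {A B D} f g := ⟨(f.1.1 ≫ g.1.1, f.1.2.1 ≫ g.1.2.1, f.1.2.2 ≫ g.1.2.2), by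
    obtain ⟨hf₁, hf₂⟩ := f.2
    obtain ⟨hg₁, hg₂⟩ := g.2
    constructor
    · rw [← Category.assoc, hf₁, Category.assoc, hg₁, ← Category.assoc]
    · rw [← Category.assoc, hf₂, Category.assoc, hg₂, ← Category.assoc]⟩

/-- Degree `-1` component of a morphism of conflations. -/
def homC₁ {A B : ConfObj E} (f : A ⟶ B) : A.X₁ ⟶ B.X₁ := f.1.1

/-- Degree `0` component of a morphism of conflations. -/
def homC₂ {A B : ConfObj E} (f : A ⟶ B) : A.X₂ ⟶ B.X₂ := f.1.2.1

/-- Degree `1` component of a morphism of conflations. -/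
def homC₃ {A B : ConfObj E} (f : A ⟶ B) : A.X₃ ⟶ B.X₃ := f.1.2.2

lemma confHom_ext {A B : ConfObj E} {f g : A ⟶ B} (h₁ : homC₁ f = homC₁ g)
    (h₂ : homC₂ f = homC₂ g) (h₃ : homC₃ f = homC₃ g) : f = g := by
  apply Subtype.ext
  show (homC₁ f, homC₂ f, homC₃ f) = (homC₁ g, homC₂ g, homC₃ g)
  rw [h₁, h₂, h₃]

@[simp] lemma homC₁_id (A : ConfObj E) : homC₁ (𝟙 A) = 𝟙 A.X₁ := rfl
@[simp] lemma homC₂_id (A : ConfObj E) : homC₂ (𝟙 A) = 𝟙 A.X₂ := rfl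
@[simp] lemma homC₃_id (A : ConfObj E) : homC₃ (𝟙 A) = 𝟙 A.X₃ := rfl
@[simp] lemma homC₁_comp {A B D : ConfObj E} (f : A ⟶ B) (g : B ⟶ D) :
    homC₁ (f ≫ g) = homC₁ f ≫ homC₁ g := rfl
@[simp] lemma homC₂_comp {A B D : ConfObj E} (f : A ⟶ B) (g : B ⟶ D) :
    homC₂ (f ≫ g) = homC₂ f ≫ homC₂ g := rfl
@[simp] lemma homC₃_comp {A B D : ConfObj E} (f : A ⟶ B) (g : B ⟶ D) :
    homC₃ (f ≫ g) = homC₃ f ≫ homC₃ g := rfl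

instance confCategory : Category.{v} (ConfObj E) where
  id_comp f := confHom_ext (by simp) (by simp) (by simp)
  comp_id f := confHom_ext (by simp) (by simp) (by simp)
  assoc f g h := confHom_ext (by simp) (by simp) (by simp)

instance confHomAddCommGroup (A B : ConfObj E) : AddCommGroup (A ⟶ B) :=
  inferInstanceAs (AddCommGroup ↥(confHomGroup A B))

@[simp] lemma homC₁_add {A B : ConfObj E} (f g : A ⟶ B) :
    homC₁ (f + g) = homC₁ f + homC₁ g := rfl
@[simp] lemma homC₂_add {A B : ConfObj E} (f g : A ⟶ B) :
    homC₂ (f + g) = homC₂ f + homC₂ g := rfl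
@[simp] lemma homC₃_add {A B : ConfObj E} (f g : A ⟶ B) :
    homC₃ (f + g) = homC₃ f + homC₃ g := rfl

instance confPreadditive : Preadditive (ConfObj E) where
  homGroup A B := inferInstance
  add_comp A B D f f' g :=
    confHom_ext (by simp [Preadditive.add_comp]) (by simp [Preadditive.add_comp])
      (by simp [Preadditive.add_comp])
  comp_add A B D f g g' :=
    confHom_ext (by simp [Preadditive.comp_add]) (by simp [Preadditive.comp_add])
      (by simp [Preadditive.comp_add])

/-- The degree-wise class of conflations on `E(M)`: a short sequence of conflations is a
conflation if it is a conflation of `M` in each degree. -/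
def degConf (E : ExactStructure M) : ConfClass (ConfObj E) := fun _ _ _ f g =>
  E.conf (homC₁ f) (homC₁ g) ∧ E.conf (homC₂ f) (homC₂ g) ∧ E.conf (homC₃ f) (homC₃ g)

/-- The class `E₀`: degree-wise conflations splitting in degree `0`. -/
def degConf₀ (E : ExactStructure M) : ConfClass (ConfObj E) := fun _ _ _ f g =>
  degConf E f g ∧ Splits (homC₂ f) (homC₂ g)

/-- The class `E₀⁻¹`: degree-wise conflations splitting in degrees `-1` and `0`. -/
def degConf₀neg (E : ExactStructure M) : ConfClass (ConfObj E) := fun _ _ _ f g =>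
  degConf E f g ∧ Splits (homC₁ f) (homC₁ g) ∧ Splits (homC₂ f) (homC₂ g)

/-- The class `E₀¹`: degree-wise conflations splitting in degrees `0` and `1`. -/
def degConf₀pos (E : ExactStructure M) : ConfClass (ConfObj E) := fun _ _ _ f g =>
  degConf E f g ∧ Splits (homC₂ f) (homC₂ g) ∧ Splits (homC₃ f) (homC₃ g)

/-- The full subcategory `S(M)` of `E(M)` consisting of the split conflations. -/
def splitObjs (E : ExactStructure M) : Set (ConfObj E) :=
  {A | Splits A.i A.d}

end ConflationCategory

/-!
A morphism of conflations `f : A ⟶ B` factors through a split conflation exactly when its last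
component `f₃` lifts along the deflation `B.d`, so in the quotient everything is controlled by
the last components. The cokernel of `f` is `B` with its middle term enlarged to
`A.X₃ ⊞ B.X₂` and deflation `[f₃, B.d]`; the kernel comes from pulling back `B.d` along `f₃`
and then `A.d` along the resulting map `q`. Enlarging the middle term of `A` along `q` gives the
coimage, and the same pullback square shows that it is also a kernel of the cokernel.
-/

section ExactCategory

variable {M : Type u} [Category.{v} M] [Preadditive M]

lemma IsKernelOf.hom_ext {K X Y T : M} {k : K ⟶ X} {f : X ⟶ Y} (h : IsKernelOf k f)
    {a b : T ⟶ K} (hab : a ≫ k = b ≫ k) : a = b := by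
  obtain ⟨t, -, huniq⟩ := h.2 (b ≫ k) (by rw [Category.assoc, h.1, comp_zero])
  rw [huniq a hab, huniq b rfl]

lemma isKernelOf_biprod_inl [HasBinaryBiproducts M] (X Z : M) :
    IsKernelOf (biprod.inl : X ⟶ X ⊞ Z) biprod.snd := by
  refine ⟨biprod.inl_snd, fun g hg => ⟨g ≫ biprod.fst, ?_, fun t ht => by simp [← ht]⟩⟩
  show (g ≫ biprod.fst) ≫ biprod.inl = g
  conv_rhs => rw [← Category.comp_id g, ← biprod.total]
  rw [Preadditive.comp_add, reassoc_of% hg, zero_comp, add_zero, Category.assoc]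

variable (E : ExactStructure M)

lemma isDeflation_iso_comp {Y' Y Z : M} (e : Y' ≅ Y) {d : Y ⟶ Z}
    (h : IsDeflation E.conf d) : IsDeflation E.conf (e.hom ≫ d) := by
  obtain ⟨W, i, hi⟩ := h
  exact ⟨W, i ≫ e.inv, E.isoClosed (Iso.refl W) e.symm (Iso.refl Z) (by simp) (by simp) hi⟩

lemma IsDeflation.of_isPullback {A B Y Z : M} {p : Y ⟶ Z} (hp : IsDeflation E.conf p)
    {g : A ⟶ Y} {p' : A ⟶ B} {f : B ⟶ Z} (h : IsPullback g p' p f) :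
    IsDeflation E.conf p' := by
  obtain ⟨A', p'', g', hp'', h'⟩ := E.defl_pullback p hp f
  rw [← h.isoIsPullback_hom_snd _ _ h']
  exact isDeflation_iso_comp E _ hp''

lemma isZero_of_conf_id {X Z : M} {d : X ⟶ Z} (h : E.conf (𝟙 X) d) : IsZero Z := by
  obtain ⟨hd, huniq⟩ := E.coker_of_conf h
  rw [Category.id_comp] at hd
  obtain ⟨t, -, ht⟩ := huniq (0 : X ⟶ Z) (by simp)
  rw [IsZero.iff_id_eq_zero]
  exact (ht _ (by simp [hd])).trans (ht _ (by simp [hd])).symm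

lemma conf_of_isKernelOf {X X' Y Z : M} {i : X ⟶ Y} {d : Y ⟶ Z} (h : E.conf i d)
    {i' : X' ⟶ Y} (h' : IsKernelOf i' d) : E.conf i' d := by
  have hi := E.ker_of_conf h
  obtain ⟨s, hs, -⟩ := hi.2 i' h'.1
  obtain ⟨t, ht, -⟩ := h'.2 i hi.1
  let e : X ≅ X' :=
    { hom := t
      inv := s
      hom_inv_id := hi.hom_ext (by rw [Category.assoc, hs, ht, Category.id_comp])
      inv_hom_id := h'.hom_ext (by rw [Category.assoc, ht, hs, Category.id_comp]) }
  exact E.isoClosed e (Iso.refl Y) (Iso.refl Z) (by simp [e, ht]) (by simp) h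

variable [HasBinaryBiproducts M]

lemma isDeflation_biprod_snd (X Z : M) : IsDeflation E.conf (biprod.snd : X ⊞ Z ⟶ Z) := by
  obtain ⟨Z₀, d, hd⟩ := E.id_isInflation X
  have hZ₀ := (isZero_of_conf_id E hd).isTerminal
  have hpb : IsPullback biprod.fst biprod.snd (hZ₀.from X) (hZ₀.from Z) :=
    IsPullback.of_is_product' (BinaryBiproduct.isLimit X Z) hZ₀
  exact IsDeflation.of_isPullback E ⟨X, 𝟙 X, hZ₀.hom_ext d (hZ₀.from X) ▸ hd⟩ hpb

lemma isDeflation_biprod_map_id (X : M) {Y Z : M} {p : Y ⟶ Z} (hp : IsDeflation E.conf p) :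
    IsDeflation E.conf (biprod.map (𝟙 X) p) := by
  have hw : (biprod.snd : X ⊞ Y ⟶ Y) ≫ p = biprod.map (𝟙 X) p ≫ biprod.snd := by simp
  have hlim : IsLimit (PullbackCone.mk _ _ hw) := by
    refine PullbackCone.IsLimit.mk hw (fun s => biprod.lift (s.snd ≫ biprod.fst) s.fst)
      (fun s => by simp) (fun s => ?_) (fun s m h₁ h₂ => ?_)
    · apply biprod.hom_ext <;> simp [s.condition]
    · apply biprod.hom_ext
      · simpa using congrArg (· ≫ biprod.fst) h₂
      · simpa using h₁
  exact IsDeflation.of_isPullback E hp (IsPullback.of_isLimit hlim)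

lemma isDeflation_biprod_desc {X Y Z : M} (g : X ⟶ Z) {p : Y ⟶ Z}
    (hp : IsDeflation E.conf p) : IsDeflation E.conf (biprod.desc g p) := by
  let φ : X ⊞ Z ≅ X ⊞ Z :=
    { hom := biprod.lift biprod.fst (biprod.desc g (𝟙 Z))
      inv := biprod.lift biprod.fst (biprod.desc (-g) (𝟙 Z))
      hom_inv_id := by apply biprod.hom_ext' <;> apply biprod.hom_ext <;> simp
      inv_hom_id := by apply biprod.hom_ext' <;> apply biprod.hom_ext <;> simp }
  have hφ : IsDeflation E.conf (φ.hom ≫ biprod.snd) :=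
    isDeflation_iso_comp E φ (isDeflation_biprod_snd E X Z)
  have hcomp : biprod.desc g p = biprod.map (𝟙 X) p ≫ φ.hom ≫ biprod.snd := by
    apply biprod.hom_ext' <;> simp [φ]
  rw [hcomp]
  exact E.defl_comp _ _ (isDeflation_biprod_map_id E X hp) hφ

lemma conf_biprod_inl_snd (X Z : M) : E.conf (biprod.inl : X ⟶ X ⊞ Z) biprod.snd := by
  obtain ⟨W, i, hi⟩ := isDeflation_biprod_snd E X Z
  exact conf_of_isKernelOf E hi (isKernelOf_biprod_inl X Z)

end ExactCategory

section QuotientCategory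

variable {C : Type u} [Category.{v} C] [Preadditive C] {P : Set C}

lemma qmap_comp {X Y Z : C} (f : X ⟶ Y) (g : Y ⟶ Z) :
    qmap P (f ≫ g) = qmap P f ≫ qmap P g := rfl

lemma qmap_sub {X Y : C} (f g : X ⟶ Y) : qmap P (f - g) = qmap P f - qmap P g := rfl

lemma qmap_eq_zero_iff {X Y : C} (f : X ⟶ Y) : qmap P f = 0 ↔ f ∈ factorIdeal P X Y :=
  QuotientAddGroup.eq_zero_iff f

lemma qmap_surjective {X Y : C} :
    Function.Surjective (qmap P : (X ⟶ Y) → ((QuotObj.mk X : QuotObj P) ⟶ QuotObj.mk Y)) :=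
  QuotientAddGroup.mk_surjective

lemma mono_qmap {X Y : C} {f : X ⟶ Y}
    (h : ∀ {W : C} (g : W ⟶ X), qmap P (g ≫ f) = 0 → qmap P g = 0) : Mono (qmap P f) := by
  refine Preadditive.mono_of_cancel_zero _ fun {W} G hG => ?_
  obtain ⟨g, rfl⟩ := qmap_surjective (X := W.obj) G
  exact h g hG

lemma epi_qmap {X Y : C} {f : X ⟶ Y}
    (h : ∀ {W : C} (g : Y ⟶ W), qmap P (f ≫ g) = 0 → qmap P g = 0) : Epi (qmap P f) := by
  refine Preadditive.epi_of_cancel_zero _ fun {W} G hG => ?_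
  obtain ⟨g, rfl⟩ := qmap_surjective (Y := W.obj) G
  exact h g hG

lemma nonempty_isLimit_kernelFork_qmap {K X Y : C} {k : K ⟶ X} {f : X ⟶ Y}
    (w : qmap P k ≫ qmap P f = 0) [Mono (qmap P k)]
    (h : ∀ {W : C} (g : W ⟶ X), qmap P (g ≫ f) = 0 → ∃ l : W ⟶ K, qmap P (l ≫ k) = qmap P g) :
    Nonempty (IsLimit (KernelFork.ofι _ w)) := by
  refine ⟨KernelFork.IsLimit.ofι' _ _ fun {W} G hG => ?_⟩
  have hg := (qmap_surjective (X := W.obj) G).choose_spec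
  rw [← hg] at hG
  exact ⟨qmap P (h _ hG).choose, (h _ hG).choose_spec.trans hg⟩

lemma nonempty_isColimit_cokernelCofork_qmap {X Y Q : C} {f : X ⟶ Y} {c : Y ⟶ Q}
    (w : qmap P f ≫ qmap P c = 0) [Epi (qmap P c)]
    (h : ∀ {W : C} (g : Y ⟶ W), qmap P (f ≫ g) = 0 → ∃ l : Q ⟶ W, qmap P (c ≫ l) = qmap P g) :
    Nonempty (IsColimit (CokernelCofork.ofπ _ w)) := by
  refine ⟨CokernelCofork.IsColimit.ofπ' _ _ fun {W} G hG => ?_⟩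
  have hg := (qmap_surjective (Y := W.obj) G).choose_spec
  rw [← hg] at hG
  exact ⟨qmap P (h _ hG).choose, (h _ hG).choose_spec.trans hg⟩

end QuotientCategory

section CoimageImage

variable {D : Type*} [Category D] [Preadditive D] [HasKernels D] [HasCokernels D]

lemma exists_coimage_iso {X Y K C : D} {f : X ⟶ Y} {k : K ⟶ X} {p : X ⟶ C}
    {wk : k ≫ f = 0} (hk : IsLimit (KernelFork.ofι k wk))
    {wp : k ≫ p = 0} (hp : IsColimit (CokernelCofork.ofπ p wp)) :
    ∃ e : Abelian.coimage f ≅ C, Abelian.coimage.π f ≫ e.hom = p := by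
  let e₁ := hk.conePointUniqueUpToIso (kernelIsKernel f)
  have he₁ : kernel.ι f = e₁.inv ≫ k := by
    simpa using (hk.conePointUniqueUpToIso_inv_comp (kernelIsKernel f) .zero).symm
  let hp' := isCokernelEpiComp hp e₁.inv he₁
  exact ⟨(cokernelIsCokernel _).coconePointUniqueUpToIso hp',
    by simpa using (cokernelIsCokernel _).comp_coconePointUniqueUpToIso_hom hp' .one⟩

lemma exists_image_iso {X Y C I : D} {f : X ⟶ Y} {c : Y ⟶ C} {m : I ⟶ Y}
    {wc : f ≫ c = 0} (hc : IsColimit (CokernelCofork.ofπ c wc))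
    {wm : m ≫ c = 0} (hm : IsLimit (KernelFork.ofι m wm)) :
    ∃ e : I ≅ Abelian.image f, e.hom ≫ Abelian.image.ι f = m := by
  let e₁ := hc.coconePointUniqueUpToIso (cokernelIsCokernel f)
  have he₁ : cokernel.π f = c ≫ e₁.hom := by
    simpa using (hc.comp_coconePointUniqueUpToIso_hom (cokernelIsCokernel f) .one).symm
  let hm' := isKernelCompMono hm e₁.hom he₁
  exact ⟨hm'.conePointUniqueUpToIso (limit.isLimit _),
    by simpa using hm'.conePointUniqueUpToIso_hom_comp (limit.isLimit _) .zero⟩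

lemma isIso_coimageImageComparison {X Y K C₀ C : D} {f : X ⟶ Y} {k : K ⟶ X}
    {p : X ⟶ C₀} {m : C₀ ⟶ Y} {c : Y ⟶ C} (hpm : p ≫ m = f)
    {wk : k ≫ f = 0} (hk : IsLimit (KernelFork.ofι k wk))
    {wp : k ≫ p = 0} (hp : IsColimit (CokernelCofork.ofπ p wp))
    {wc : f ≫ c = 0} (hc : IsColimit (CokernelCofork.ofπ c wc))
    {wm : m ≫ c = 0} (hm : IsLimit (KernelFork.ofι m wm)) :
    IsIso (Abelian.coimageImageComparison f) := by
  obtain ⟨e₁, he₁⟩ := exists_coimage_iso hk hp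
  obtain ⟨e₂, he₂⟩ := exists_image_iso hc hm
  have : Abelian.coimageImageComparison f = e₁.hom ≫ e₂.hom := by
    rw [← cancel_epi (Abelian.coimage.π f), ← cancel_mono (Abelian.image.ι f)]
    simp only [Category.assoc, Abelian.coimage_image_factorisation, he₂, reassoc_of% he₁, hpm]
  rw [this]
  infer_instance

end CoimageImage

section ConflationMorphisms

variable {M : Type u} [Category.{v} M] [Preadditive M] {E : ExactStructure M}

@[simp] lemma homC₃_zero {A B : ConfObj E} : homC₃ (0 : A ⟶ B) = 0 := rfl
@[simp] lemma homC₃_neg {A B : ConfObj E} (f : A ⟶ B) : homC₃ (-f) = -homC₃ f := rfl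
@[simp] lemma homC₃_sub {A B : ConfObj E} (f g : A ⟶ B) :
    homC₃ (f - g) = homC₃ f - homC₃ g := rfl

lemma comm₁₂ {A B : ConfObj E} (f : A ⟶ B) : A.i ≫ homC₂ f = homC₁ f ≫ B.i := f.2.1

lemma comm₂₃ {A B : ConfObj E} (f : A ⟶ B) : A.d ≫ homC₃ f = homC₂ f ≫ B.d := f.2.2

@[simp]
lemma ConfObj.i_d (A : ConfObj E) : A.i ≫ A.d = 0 := (E.ker_of_conf A.conf).1

lemma ConfObj.i_cancel (A : ConfObj E) {T : M} {a b : T ⟶ A.X₁} (h : a ≫ A.i = b ≫ A.i) :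
    a = b :=
  (E.ker_of_conf A.conf).hom_ext h

lemma confHom_ext₂₃ {A B : ConfObj E} {f g : A ⟶ B} (h₂ : homC₂ f = homC₂ g)
    (h₃ : homC₃ f = homC₃ g) : f = g :=
  confHom_ext (B.i_cancel (by rw [← comm₁₂, ← comm₁₂, h₂])) h₂ h₃

noncomputable def ConfObj.homMk {A B : ConfObj E} (u : A.X₂ ⟶ B.X₂) (h₃ : A.X₃ ⟶ B.X₃)
    (w : u ≫ B.d = A.d ≫ h₃) : A ⟶ B :=
  let h₁ := (E.ker_of_conf B.conf).2 (A.i ≫ u)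
    (by rw [Category.assoc, w, ← Category.assoc, A.i_d, zero_comp])
  ⟨(h₁.exists.choose, u, h₃), h₁.exists.choose_spec.symm, w.symm⟩

@[simp] lemma homC₂_homMk {A B : ConfObj E} (u : A.X₂ ⟶ B.X₂) (h₃ : A.X₃ ⟶ B.X₃)
    (w : u ≫ B.d = A.d ≫ h₃) : homC₂ (ConfObj.homMk u h₃ w) = u := rfl

@[simp] lemma homC₃_homMk {A B : ConfObj E} (u : A.X₂ ⟶ B.X₂) (h₃ : A.X₃ ⟶ B.X₃)
    (w : u ≫ B.d = A.d ≫ h₃) : homC₃ (ConfObj.homMk u h₃ w) = h₃ := rfl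

lemma exists_lift_of_mem_factorIdeal {A B : ConfObj E} {f : A ⟶ B}
    (hf : f ∈ factorIdeal (splitObjs E) A B) : ∃ v : A.X₃ ⟶ B.X₂, v ≫ B.d = homC₃ f := by
  induction hf using AddSubgroup.closure_induction with
  | mem f hf =>
    obtain ⟨S, ⟨-, s, hs⟩, a, b, rfl⟩ := hf
    refine ⟨homC₃ a ≫ s ≫ homC₂ b, ?_⟩
    rw [Category.assoc, Category.assoc, ← comm₂₃, reassoc_of% hs, homC₃_comp]
  | zero => exact ⟨0, by simp⟩
  | add f g _ _ hf hg =>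
    obtain ⟨v, hv⟩ := hf
    obtain ⟨w, hw⟩ := hg
    exact ⟨v + w, by rw [Preadditive.add_comp, hv, hw, homC₃_add]⟩
  | neg f _ hf =>
    obtain ⟨v, hv⟩ := hf
    exact ⟨-v, by rw [Preadditive.neg_comp, hv, homC₃_neg]⟩

end ConflationMorphisms

section SplitIdeal

variable {M : Type u} [Category.{v} M] [Preadditive M] [HasBinaryBiproducts M]
  {E : ExactStructure M}

/-- A morphism whose last component lifts along `B.d` factors through the split conflation
`B.X₁ → B.X₁ ⊞ A.X₃ → A.X₃`. -/
lemma mem_factorIdeal_of_lift {A B : ConfObj E} {f : A ⟶ B} (v : A.X₃ ⟶ B.X₂)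
    (hv : v ≫ B.d = homC₃ f) : f ∈ factorIdeal (splitObjs E) A B := by
  obtain ⟨w, hw, -⟩ := (E.ker_of_conf B.conf).2 (homC₂ f - A.d ≫ v) (by
    rw [Preadditive.sub_comp, Category.assoc, hv, ← comm₂₃, sub_self])
  let S : ConfObj E :=
    ⟨B.X₁, B.X₁ ⊞ A.X₃, A.X₃, biprod.inl, biprod.snd, conf_biprod_inl_snd E _ _⟩
  let a : A ⟶ S := ConfObj.homMk (biprod.lift w A.d) (𝟙 A.X₃) (by simp [S])
  let b : S ⟶ B := ConfObj.homMk (biprod.desc B.i v) (homC₃ f : A.X₃ ⟶ B.X₃)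
    (by apply biprod.hom_ext' <;> simp [S, hv])
  refine AddSubgroup.subset_closure ⟨S, ⟨⟨biprod.fst, by simp [S]⟩, biprod.inr, by simp [S]⟩,
    a, b, confHom_ext₂₃ ?_ (by simp [a, b])⟩
  simp [a, b, hw]

lemma qmap_eq_zero_iff_exists_lift {A B : ConfObj E} (f : A ⟶ B) :
    qmap (splitObjs E) f = 0 ↔ ∃ v : A.X₃ ⟶ B.X₂, v ≫ B.d = homC₃ f := by
  rw [qmap_eq_zero_iff]
  exact ⟨exists_lift_of_mem_factorIdeal, fun ⟨v, hv⟩ => mem_factorIdeal_of_lift v hv⟩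

lemma qmap_eq_of_homC₃_eq {A B : ConfObj E} {f g : A ⟶ B} (h : homC₃ f = homC₃ g) :
    qmap (splitObjs E) f = qmap (splitObjs E) g := by
  rw [← sub_eq_zero, ← qmap_sub, qmap_eq_zero_iff_exists_lift]
  exact ⟨0, by simp [h]⟩

end SplitIdeal

section Cokernels

variable {M : Type u} [Category.{v} M] [Preadditive M] [HasBinaryBiproducts M]
  {E : ExactStructure M}

noncomputable abbrev ConfObj.extendMiddle (B : ConfObj E) {X : M} (u : X ⟶ B.X₃) : ConfObj E :=
  let h := isDeflation_biprod_desc E u ⟨B.X₁, B.i, B.conf⟩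
  ⟨h.choose, X ⊞ B.X₂, B.X₃, h.choose_spec.choose, biprod.desc u B.d, h.choose_spec.choose_spec⟩

noncomputable def ConfObj.toExtendMiddle (B : ConfObj E) {X : M} (u : X ⟶ B.X₃) :
    B ⟶ B.extendMiddle u :=
  ConfObj.homMk biprod.inr (𝟙 B.X₃) (by simp)

@[simp] lemma homC₂_toExtendMiddle (B : ConfObj E) {X : M} (u : X ⟶ B.X₃) :
    homC₂ (B.toExtendMiddle u) = biprod.inr := rfl

@[simp] lemma homC₃_toExtendMiddle (B : ConfObj E) {X : M} (u : X ⟶ B.X₃) :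
    homC₃ (B.toExtendMiddle u) = 𝟙 B.X₃ := rfl

noncomputable def ConfObj.descExtendMiddle {B D : ConfObj E} {X : M} {u : X ⟶ B.X₃}
    (g : B ⟶ D) (v : X ⟶ D.X₂) (hv : v ≫ D.d = u ≫ homC₃ g) : B.extendMiddle u ⟶ D :=
  ConfObj.homMk (biprod.desc v (homC₂ g)) (homC₃ g : B.X₃ ⟶ D.X₃)
    (by apply biprod.hom_ext' <;> simp [hv, comm₂₃])

@[simp] lemma homC₂_descExtendMiddle {B D : ConfObj E} {X : M} {u : X ⟶ B.X₃}
    (g : B ⟶ D) (v : X ⟶ D.X₂) (hv : v ≫ D.d = u ≫ homC₃ g) :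
    homC₂ (ConfObj.descExtendMiddle g v hv) = biprod.desc v (homC₂ g) := rfl

@[simp] lemma homC₃_descExtendMiddle {B D : ConfObj E} {X : M} {u : X ⟶ B.X₃}
    (g : B ⟶ D) (v : X ⟶ D.X₂) (hv : v ≫ D.d = u ≫ homC₃ g) :
    homC₃ (ConfObj.descExtendMiddle g v hv) = homC₃ g := rfl

lemma toExtendMiddle_comp_descExtendMiddle {B D : ConfObj E} {X : M} {u : X ⟶ B.X₃}
    (g : B ⟶ D) (v : X ⟶ D.X₂) (hv : v ≫ D.d = u ≫ homC₃ g) :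
    B.toExtendMiddle u ≫ ConfObj.descExtendMiddle g v hv = g :=
  confHom_ext₂₃ (by simp) (by simp)

instance epi_qmap_toExtendMiddle (B : ConfObj E) {X : M} (u : X ⟶ B.X₃) :
    Epi (qmap (splitObjs E) (B.toExtendMiddle u)) :=
  epi_qmap fun g hg => (qmap_eq_zero_iff_exists_lift g).2 <| by
    simpa using (qmap_eq_zero_iff_exists_lift _).1 hg

lemma qmap_comp_toExtendMiddle_eq_zero {A B : ConfObj E} (f : A ⟶ B) :
    qmap (splitObjs E) f ≫ qmap (splitObjs E) (B.toExtendMiddle (homC₃ f)) = 0 :=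
  (qmap_eq_zero_iff_exists_lift _).2 ⟨biprod.inl, by simp⟩

lemma nonempty_isColimit_toExtendMiddle {A B : ConfObj E} (f : A ⟶ B) :
    Nonempty (IsColimit (CokernelCofork.ofπ _ (qmap_comp_toExtendMiddle_eq_zero f))) :=
  nonempty_isColimit_cokernelCofork_qmap _ fun g hg => by
    obtain ⟨v, hv⟩ := (qmap_eq_zero_iff_exists_lift _).1 hg
    exact ⟨ConfObj.descExtendMiddle g v (hv.trans (homC₃_comp f g)),
      by rw [toExtendMiddle_comp_descExtendMiddle]⟩

lemma hasCokernels_quotObj_splitObjs : HasCokernels (QuotObj (splitObjs E)) where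
  has_colimit F := by
    obtain ⟨f, rfl⟩ := qmap_surjective F
    obtain ⟨hc⟩ := nonempty_isColimit_toExtendMiddle f
    exact HasColimit.mk ⟨_, hc⟩

end Cokernels

section Kernels

variable {M : Type u} [Category.{v} M] [Preadditive M] [HasBinaryBiproducts M]
  {E : ExactStructure M}

lemma exists_isLimit_kernelFork_qmap {A B : ConfObj E} (f : A ⟶ B) :
    ∃ (K : ConfObj E) (k : K ⟶ A) (w : qmap (splitObjs E) k ≫ qmap (splitObjs E) f = 0),
      (∃ e : K.X₃ ⟶ B.X₂, IsPullback e (homC₃ k) B.d (homC₃ f)) ∧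
        Nonempty (IsLimit (KernelFork.ofι _ w)) := by
  obtain ⟨P, q, e, -, hP⟩ := E.defl_pullback B.d ⟨_, _, B.conf⟩ (homC₃ f)
  obtain ⟨Q, π, a, ⟨L, l, hl⟩, hQ⟩ := E.defl_pullback A.d ⟨_, _, A.conf⟩ q
  let k : ⟨L, Q, P, l, π, hl⟩ ⟶ A := ConfObj.homMk a q hQ.w
  have w : qmap (splitObjs E) k ≫ qmap (splitObjs E) f = 0 :=
    (qmap_eq_zero_iff_exists_lift _).2 ⟨e, hP.w⟩
  have : Mono (qmap (splitObjs E) k) := mono_qmap fun g hg => by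
    obtain ⟨v, hv⟩ := (qmap_eq_zero_iff_exists_lift _).1 hg
    exact (qmap_eq_zero_iff_exists_lift g).2 ⟨hQ.lift v (homC₃ g) hv, hQ.lift_snd _ _ _⟩
  refine ⟨_, k, w, ⟨e, hP⟩, nonempty_isLimit_kernelFork_qmap w fun {D} g hg => ?_⟩
  obtain ⟨v, hv⟩ := (qmap_eq_zero_iff_exists_lift _).1 hg
  let x := hP.lift v (homC₃ g) hv
  have hxq : x ≫ q = homC₃ g := hP.lift_snd _ _ _
  have hx : homC₂ g ≫ A.d = (D.d ≫ x) ≫ q := by rw [Category.assoc, hxq, comm₂₃]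
  exact ⟨ConfObj.homMk (hQ.lift (homC₂ g) (D.d ≫ x) hx) x (hQ.lift_snd _ _ _),
    qmap_eq_of_homC₃_eq hxq⟩

lemma hasKernels_quotObj_splitObjs : HasKernels (QuotObj (splitObjs E)) where
  has_limit F := by
    obtain ⟨f, rfl⟩ := qmap_surjective F
    obtain ⟨K, k, w, -, ⟨hk⟩⟩ := exists_isLimit_kernelFork_qmap f
    exact HasLimit.mk ⟨_, hk⟩

lemma nonempty_isLimit_descExtendMiddle {A B : ConfObj E} (f : A ⟶ B) {P : M}
    {e : P ⟶ B.X₂} {q : P ⟶ A.X₃} (hP : IsPullback e q B.d (homC₃ f)) :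
    Nonempty (IsLimit (KernelFork.ofι _
      (qmap_comp_toExtendMiddle_eq_zero (ConfObj.descExtendMiddle (u := q) f e hP.w)))) := by
  have : Mono (qmap (splitObjs E) (ConfObj.descExtendMiddle (u := q) f e hP.w)) :=
    mono_qmap fun h hh => by
      obtain ⟨v, hv⟩ := (qmap_eq_zero_iff_exists_lift _).1 hh
      exact (qmap_eq_zero_iff_exists_lift h).2
        ⟨hP.lift v (homC₃ h :) hv ≫ biprod.inl, by simpa using hP.lift_snd _ _ _⟩
  refine nonempty_isLimit_kernelFork_qmap _ fun {D} t ht => ?_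
  obtain ⟨v, hv⟩ := (qmap_eq_zero_iff_exists_lift _).1 ht
  have hsplit : (v ≫ biprod.fst) ≫ (homC₃ f : A.X₃ ⟶ B.X₃) + (v ≫ biprod.snd) ≫ B.d =
      homC₃ t := by
    simp only [homC₃_comp, homC₃_toExtendMiddle, homC₃_descExtendMiddle, Category.comp_id,
      biprod.desc_eq, Preadditive.comp_add] at hv
    simpa only [Category.assoc] using hv
  have hx : (homC₂ t - D.d ≫ v ≫ biprod.snd) ≫ B.d =
      (D.d ≫ v ≫ biprod.fst) ≫ (homC₃ f : A.X₃ ⟶ B.X₃) := by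
    rw [Preadditive.sub_comp, ← comm₂₃, ← hsplit]
    simp only [Preadditive.comp_add, Category.assoc, add_sub_cancel_right]
  refine ⟨ConfObj.homMk (hP.lift _ _ hx ≫ biprod.inl) (v ≫ biprod.fst) (by simp), ?_⟩
  rw [← sub_eq_zero, ← qmap_sub, qmap_eq_zero_iff_exists_lift]
  refine ⟨-(v ≫ biprod.snd), ?_⟩
  simp [← hsplit]

end Kernels

/-- the quotient category `E(M)/S(M)` of the category of conflations by
the split conflations is abelian. -/
theorem conflationQuotient_abelian {M : Type u} [Category.{v} M] [Preadditive M]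
    [HasBinaryBiproducts M] (E : ExactStructure M) :
    IsAbelianCat (QuotObj (splitObjs E)) := by
  have := hasKernels_quotObj_splitObjs (E := E)
  have := hasCokernels_quotObj_splitObjs (E := E)
  refine ⟨inferInstance, inferInstance, fun F => ?_⟩
  obtain ⟨f, rfl⟩ := qmap_surjective F
  obtain ⟨K, k, wk, ⟨e, hP⟩, ⟨hk⟩⟩ := exists_isLimit_kernelFork_qmap f
  obtain ⟨hp⟩ := nonempty_isColimit_toExtendMiddle k
  obtain ⟨hc⟩ := nonempty_isColimit_toExtendMiddle f
  obtain ⟨hm⟩ := nonempty_isLimit_descExtendMiddle f hP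
  exact isIso_coimageImageComparison
    (congrArg (qmap _) (toExtendMiddle_comp_descExtendMiddle f e hP.w)) hk hp hc hm

end PaperQEC
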